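/- Let L ≥ 0 and let f₁, f₂ : ℝ → ℝ be monotone (nondecreasing) and Lipschitz continuous with Lipschitz constant L. Let M₁, M₂ ∈ ℝ satisfy f₁(M₁) = f₂(M₂). Then for all real numbers a and b: (f₂(b) − f₁(a)) · ((a − M₁)⁺ − (b − M₂)⁺) ≤ L · ( ((a − M₁)⁺)² + ((b − M₂)⁺)² ), where x⁺ := max(x, 0) denotes the positive part. -/
import Mathlib

theorem stmt_7 (L : ℝ) (hL : 0 ≤ L) (f₁ f₂ : ℝ → ℝ)
    (hmono₁ : Monotone f₁) (hmono₂ : Monotone f₂)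
    (hlip₁ : ∀ x y : ℝ, |f₁ x - f₁ y| ≤ L * |x - y|)
    (hlip₂ : ∀ x y : ℝ, |f₂ x - f₂ y| ≤ L * |x - y|)
    (M₁ M₂ : ℝ) (hM : f₁ M₁ = f₂ M₂) :
    ∀ a b : ℝ,
      (f₂ b - f₁ a) * (max (a - M₁) 0 - max (b - M₂) 0) ≤
        L * ((max (a - M₁) 0) ^ 2 + (max (b - M₂) 0) ^ 2) := by
  intro a b
  set u := max (a - M₁) 0 with hu
  set v := max (b - M₂) 0 with hv
  have hu0 : 0 ≤ u := le_max_right _ _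
  have hv0 : 0 ≤ v := le_max_right _ _
  set A := f₁ a - f₁ M₁ with hA
  set B := f₂ b - f₂ M₂ with hB
  have hAu : 0 ≤ A * u := by
    rcases le_or_gt a M₁ with h | h
    · have : u = 0 := by simp [hu, sub_nonpos.mpr h]
      simp [this]
    · exact mul_nonneg (sub_nonneg.mpr (hmono₁ h.le)) hu0
  have hBv : 0 ≤ B * v := by
    rcases le_or_gt b M₂ with h | h
    · have : v = 0 := by simp [hv, sub_nonpos.mpr h]
      simp [this]
    · exact mul_nonneg (sub_nonneg.mpr (hmono₂ h.le)) hv0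
  have hAle : A ≤ L * u := by
    rcases le_or_gt a M₁ with h | h
    · have : A ≤ 0 := sub_nonpos.mpr (hmono₁ h)
      exact this.trans (mul_nonneg hL hu0)
    · have h1 : A ≤ |A| := le_abs_self _
      have h2 : |A| ≤ L * |a - M₁| := hlip₁ a M₁
      have h3 : |a - M₁| = u := by
        rw [abs_of_nonneg (sub_nonneg.mpr h.le), hu, max_eq_left (sub_nonneg.mpr h.le)]
      linarith [h2, h3 ▸ h2]
  have hBle : B ≤ L * v := by
    rcases le_or_gt b M₂ with h | h
    · have : B ≤ 0 := sub_nonpos.mpr (hmono₂ h)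
      exact this.trans (mul_nonneg hL hv0)
    · have h1 : B ≤ |B| := le_abs_self _
      have h2 : |B| ≤ L * |b - M₂| := hlip₂ b M₂
      have h3 : |b - M₂| = v := by
        rw [abs_of_nonneg (sub_nonneg.mpr h.le), hv, max_eq_left (sub_nonneg.mpr h.le)]
      linarith [h3 ▸ h2]
  have hBu : B * u ≤ L * v * u := mul_le_mul_of_nonneg_right hBle hu0
  have hAv : A * v ≤ L * u * v := mul_le_mul_of_nonneg_right hAle hv0
  have key : f₂ b - f₁ a = B - A := by rw [hA, hB, hM]; ring
  have hsq : 0 ≤ (u - v)^2 := sq_nonneg _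
  nlinarith [hBu, hAv, hAu, hBv, mul_nonneg hL hsq]
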